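/- arXiv:2209.04438 — 4 statements merged into one kernel-verified Lean document; each statement's English description precedes it below -/
import Mathlib

section
/- In a finite connected simple graph G, every peripheral vertex belongs to the CEJZ boundary (∂G)', and consequently every peripheral vertex belongs to the Steinerberger boundary ∂G. -/
/-!
If `v` is peripheral and `u` realises `ecc v`, then every vertex `w` satisfies
`d(w,u) ≤ ecc w ≤ diam G = d(v,u)`, so `u` witnesses `v ∈ (∂G)'`. In a connected graph with
at least two vertices any such witness differs from `v`, and the neighbour of `v` on a shortest
path to `u` is strictly closer to `u`, which makes the averaged inequality of `∂G` strict.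
-/

open Finset

variable {V : Type*}

/-- The Steinerberger boundary of a graph. -/
def sBoundary (G : SimpleGraph V) [Fintype V] [DecidableRel G.Adj] : Set V :=
  if Fintype.card V = 1 then Set.univ
  else {v | ∃ u : V, ∑ w ∈ G.neighborFinset v, G.dist w u < G.degree v * G.dist v u}

/-- The Chartrand–Erwin–Johns–Zhang boundary of a graph. -/
def cBoundary (G : SimpleGraph V) : Set V :=
  {v | ∃ u : V, ∀ w : V, G.Adj v w → G.dist w u ≤ G.dist v u}

/-- The eccentricity of a vertex: the maximum distance to another vertex. -/
noncomputable def ecc (G : SimpleGraph V) [Fintype V] (v : V) : ℕ :=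
  Finset.univ.sup fun w => G.dist v w

/-- The diameter of a graph: the maximum eccentricity. -/
noncomputable def gdiam (G : SimpleGraph V) [Fintype V] : ℕ :=
  Finset.univ.sup fun v => ecc G v

lemma SimpleGraph.Reachable.exists_adj_dist_lt {G : SimpleGraph V} {u v : V}
    (h : G.Reachable v u) (hne : v ≠ u) : ∃ w, G.Adj v w ∧ G.dist w u < G.dist v u := by
  obtain ⟨p, hp⟩ := h.exists_walk_length_eq_dist
  cases p with
  | nil => exact absurd rfl hne
  | cons hadj q =>
    refine ⟨_, hadj, ?_⟩
    have := SimpleGraph.dist_le q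
    rw [SimpleGraph.Walk.length_cons] at hp
    omega

section Eccentricity

variable [Fintype V] (G : SimpleGraph V)

lemma dist_le_ecc (v w : V) : G.dist v w ≤ ecc G v :=
  Finset.le_sup (mem_univ w)

lemma ecc_le_gdiam (v : V) : ecc G v ≤ gdiam G :=
  Finset.le_sup (mem_univ v)

lemma exists_dist_eq_ecc (v : V) : ∃ u, G.dist v u = ecc G v := by
  obtain ⟨u, -, hu⟩ := exists_mem_eq_sup univ ⟨v, mem_univ v⟩ (G.dist v ·)
  exact ⟨u, hu.symm⟩

lemma mem_cBoundary_of_ecc_eq_gdiam {v : V} (hv : ecc G v = gdiam G) : v ∈ cBoundary G := by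
  obtain ⟨u, hu⟩ := exists_dist_eq_ecc G v
  refine ⟨u, fun w _ => ?_⟩
  calc G.dist w u ≤ ecc G w := dist_le_ecc G w u
    _ ≤ gdiam G := ecc_le_gdiam G w
    _ = G.dist v u := by rw [hu, hv]

end Eccentricity

lemma cBoundary_subset_sBoundary [Fintype V] {G : SimpleGraph V} [DecidableRel G.Adj]
    (hc : G.Connected) : cBoundary G ⊆ sBoundary G := by
  rintro v ⟨u, hu⟩
  unfold sBoundary
  split_ifs with hcard
  · exact Set.mem_univ v
  have : Nontrivial V := Fintype.one_lt_card_iff_nontrivial.mp (by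
    have := Fintype.card_pos_iff.mpr ⟨v⟩
    omega)
  obtain ⟨x, hx⟩ := exists_ne v
  obtain ⟨w₀, hvw₀, -⟩ := (hc v x).exists_adj_dist_lt hx.symm
  have hvu : v ≠ u := by
    rintro rfl
    have := hu w₀ hvw₀
    rw [SimpleGraph.dist_self, Nat.le_zero, G.dist_comm,
      SimpleGraph.dist_eq_one_iff_adj.mpr hvw₀] at this
    exact one_ne_zero this
  obtain ⟨w, hvw, hlt⟩ := (hc v u).exists_adj_dist_lt hvu
  refine ⟨u, ?_⟩
  calc ∑ z ∈ G.neighborFinset v, G.dist z u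
      < ∑ _z ∈ G.neighborFinset v, G.dist v u :=
        sum_lt_sum (fun z hz => hu z ((G.mem_neighborFinset v z).mp hz))
          ⟨w, (G.mem_neighborFinset v w).mpr hvw, hlt⟩
    _ = G.degree v * G.dist v u := by
        rw [sum_const, smul_eq_mul, G.card_neighborFinset_eq_degree]

theorem peripheral_mem_boundaries [Fintype V] (G : SimpleGraph V) [DecidableRel G.Adj]
    (hc : G.Connected) (v : V) (hv : ecc G v = gdiam G) :
    v ∈ cBoundary G ∧ v ∈ sBoundary G :=
  have hv' : v ∈ cBoundary G := mem_cBoundary_of_ecc_eq_gdiam G hv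
  ⟨hv', cBoundary_subset_sBoundary hc hv'⟩
end

section
/- Let G₁ be a finite connected simple graph on vertex set V₁ with at least two vertices, let v₁ ∈ V₁, let G₂ be a finite connected simple graph on a vertex set V₂ disjoint from V₁, and let v₂ ∈ V₂. Let G be the graph on V₁ ∪ V₂ whose edges are those of G₁, those of G₂, together with the single edge (v₁, v₂). Then for every vertex v ∈ V₁ with v ≠ v₁, we have β_G(v) = β_{G₁}(v). -/
open Finset

variable {V : Type*}

/-- `betaAt G v u = Σ_{w ∈ N(v)} (d(v,u) − d(w,u))`, computed in the integers. -/
noncomputable def betaAt (G : SimpleGraph V) [Fintype V] [DecidableRel G.Adj] (v u : V) : ℤ :=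
  ∑ w ∈ G.neighborFinset v, ((G.dist v u : ℤ) - (G.dist w u : ℤ))

/-- The boundary stability number `β_G(v) = max_{u ∈ V} β_G(v,u)`. -/
noncomputable def beta (G : SimpleGraph V) [Fintype V] [Nonempty V] [DecidableRel G.Adj]
    (v : V) : ℤ :=
  Finset.univ.sup' Finset.univ_nonempty (betaAt G v)

/-- The graph on `V₁ ⊕ V₂` obtained from the disjoint union of `G₁` and `G₂` by adding the
single edge between `v₁` and `v₂`. -/
def joinGraph {V₁ V₂ : Type*} (G₁ : SimpleGraph V₁) (G₂ : SimpleGraph V₂) (v₁ : V₁)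
    (v₂ : V₂) : SimpleGraph (V₁ ⊕ V₂) where
  Adj x y :=
    (∃ a b, x = Sum.inl a ∧ y = Sum.inl b ∧ G₁.Adj a b) ∨
    (∃ a b, x = Sum.inr a ∧ y = Sum.inr b ∧ G₂.Adj a b) ∨
    (x = Sum.inl v₁ ∧ y = Sum.inr v₂) ∨
    (x = Sum.inr v₂ ∧ y = Sum.inl v₁)
  symm := by
    constructor
    rintro x y (⟨a, b, rfl, rfl, h⟩ | ⟨a, b, rfl, rfl, h⟩ | ⟨rfl, rfl⟩ | ⟨rfl, rfl⟩)
    · exact Or.inl ⟨b, a, rfl, rfl, h.symm⟩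
    · exact Or.inr (Or.inl ⟨b, a, rfl, rfl, h.symm⟩)
    · exact Or.inr (Or.inr (Or.inr ⟨rfl, rfl⟩))
    · exact Or.inr (Or.inr (Or.inl ⟨rfl, rfl⟩))
  loopless := by
    constructor
    rintro x (⟨a, b, h1, h2, h⟩ | ⟨a, b, h1, h2, h⟩ | ⟨h1, h2⟩ | ⟨h1, h2⟩)
    · subst h1; injection h2 with h2; subst h2; exact G₁.loopless.irrefl _ h
    · subst h1; injection h2 with h2; subst h2; exact G₂.loopless.irrefl _ h
    · subst h1; simp at h2
    · subst h1; simp at h2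

noncomputable instance {V₁ V₂ : Type*} {G₁ : SimpleGraph V₁} {G₂ : SimpleGraph V₂}
    {v₁ : V₁} {v₂ : V₂} : DecidableRel (joinGraph G₁ G₂ v₁ v₂).Adj :=
  Classical.decRel _

instance {α β : Type*} [Nonempty α] : Nonempty (α ⊕ β) :=
  ⟨Sum.inl (Classical.arbitrary α)⟩


section AuxLip

private lemma lip_walk {V : Type*} (G : SimpleGraph V) (f : V → ℕ)
    (hf : ∀ x y, G.Adj x y → f x ≤ f y + 1) :
    ∀ {x t : V} (p : G.Walk x t), f x ≤ f t + p.length := by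
  intro x t p
  induction p with
  | nil => simp
  | cons h p ih =>
      have := hf _ _ h
      simp only [SimpleGraph.Walk.length_cons]
      omega

private lemma lip_dist {V : Type*} (G : SimpleGraph V) (f : V → ℕ)
    (hf : ∀ x y, G.Adj x y → f x ≤ f y + 1) {x t : V} (hr : G.Reachable x t)
    (h0 : f t = 0) : f x ≤ G.dist x t := by
  obtain ⟨p, hp⟩ := hr.exists_walk_length_eq_dist
  have := lip_walk G f hf p
  omega

private lemma adjDistLe {V : Type*} {G : SimpleGraph V} (hc : G.Connected) {a b : V}
    (h : G.Adj a b) (c : V) : G.dist a c ≤ G.dist b c + 1 := by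
  have h1 : G.dist a c ≤ G.dist a b + G.dist b c := hc.dist_triangle
  have h2 : G.dist a b ≤ h.toWalk.length := SimpleGraph.dist_le _
  simp [SimpleGraph.Walk.length_cons] at h2
  omega

end AuxLip

section JoinAux

variable {V₁ V₂ : Type*} (G₁ : SimpleGraph V₁) (G₂ : SimpleGraph V₂) (v₁ : V₁) (v₂ : V₂)

private def homInl : G₁ →g joinGraph G₁ G₂ v₁ v₂ :=
  ⟨Sum.inl, fun h => Or.inl ⟨_, _, rfl, rfl, h⟩⟩

private def homInr : G₂ →g joinGraph G₁ G₂ v₁ v₂ :=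
  ⟨Sum.inr, fun h => Or.inr (Or.inl ⟨_, _, rfl, rfl, h⟩)⟩

private lemma bridgeAdj : (joinGraph G₁ G₂ v₁ v₂).Adj (Sum.inl v₁) (Sum.inr v₂) :=
  Or.inr (Or.inr (Or.inl ⟨rfl, rfl⟩))

variable {G₁ G₂}

private lemma dist_inl_inl (hc₁ : G₁.Connected) (hc₂ : G₂.Connected) (a b : V₁) :
    (joinGraph G₁ G₂ v₁ v₂).dist (Sum.inl a) (Sum.inl b) = G₁.dist a b := by
  obtain ⟨p, hp⟩ := hc₁.exists_walk_length_eq_dist a b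
  have hle : (joinGraph G₁ G₂ v₁ v₂).dist (Sum.inl a) (Sum.inl b) ≤ G₁.dist a b := by
    have := SimpleGraph.dist_le (p.map (homInl G₁ G₂ v₁ v₂))
    rwa [SimpleGraph.Walk.length_map, hp] at this
  have hge : G₁.dist a b ≤ (joinGraph G₁ G₂ v₁ v₂).dist (Sum.inl a) (Sum.inl b) := by
    refine lip_dist _ (Sum.elim (fun x => G₁.dist x b) (fun y => G₂.dist y v₂ + 1 + G₁.dist v₁ b))
      ?_ ⟨p.map (homInl G₁ G₂ v₁ v₂)⟩ SimpleGraph.dist_self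
    rintro x y (⟨a', b', rfl, rfl, h⟩ | ⟨a', b', rfl, rfl, h⟩ | ⟨rfl, rfl⟩ | ⟨rfl, rfl⟩)
    · simpa using adjDistLe hc₁ h b
    · have := adjDistLe hc₂ h v₂
      simp only [Sum.elim_inr]
      omega
    · simp [SimpleGraph.dist_self]; omega
    · simp [SimpleGraph.dist_self]; omega
  omega

private lemma dist_inl_inr (hc₁ : G₁.Connected) (hc₂ : G₂.Connected) (a : V₁) (b : V₂) :
    (joinGraph G₁ G₂ v₁ v₂).dist (Sum.inl a) (Sum.inr b)
      = G₁.dist a v₁ + 1 + G₂.dist v₂ b := by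
  obtain ⟨p₁, hp₁⟩ := hc₁.exists_walk_length_eq_dist a v₁
  obtain ⟨p₂, hp₂⟩ := hc₂.exists_walk_length_eq_dist v₂ b
  set J := joinGraph G₁ G₂ v₁ v₂
  let q : J.Walk (Sum.inl a) (Sum.inr b) :=
    (p₁.map (homInl G₁ G₂ v₁ v₂)).append
      (SimpleGraph.Walk.cons (bridgeAdj G₁ G₂ v₁ v₂) (p₂.map (homInr G₁ G₂ v₁ v₂)))
  have hlen : q.length = G₁.dist a v₁ + 1 + G₂.dist v₂ b := by
    refine (SimpleGraph.Walk.length_append _ _).trans ?_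
    refine (congr_arg₂ HAdd.hAdd rfl (SimpleGraph.Walk.length_cons _ _)).trans ?_
    refine (congr_arg₂ HAdd.hAdd (SimpleGraph.Walk.length_map _ _)
      (congr_arg₂ HAdd.hAdd (SimpleGraph.Walk.length_map _ _) rfl)).trans ?_
    rw [hp₁, hp₂]
    omega
  have hle : J.dist (Sum.inl a) (Sum.inr b) ≤ G₁.dist a v₁ + 1 + G₂.dist v₂ b := by
    have := SimpleGraph.dist_le q
    omega
  have hge : G₁.dist a v₁ + 1 + G₂.dist v₂ b ≤ J.dist (Sum.inl a) (Sum.inr b) := by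
    refine lip_dist _ (Sum.elim (fun x => G₁.dist x v₁ + 1 + G₂.dist v₂ b) (fun y => G₂.dist y b))
      ?_ ⟨q⟩ SimpleGraph.dist_self
    rintro x y (⟨a', b', rfl, rfl, h⟩ | ⟨a', b', rfl, rfl, h⟩ | ⟨rfl, rfl⟩ | ⟨rfl, rfl⟩)
    · have := adjDistLe hc₁ h v₁
      simp only [Sum.elim_inl]
      omega
    · simpa using adjDistLe hc₂ h b
    · simp [SimpleGraph.dist_self]; omega
    · simp [SimpleGraph.dist_self]; omega
  omega

private lemma neighborFinset_inl [Fintype V₁] [Fintype V₂] [DecidableRel G₁.Adj]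
    [DecidableRel (joinGraph G₁ G₂ v₁ v₂).Adj] {v : V₁} (hv : v ≠ v₁) :
    (joinGraph G₁ G₂ v₁ v₂).neighborFinset (Sum.inl v)
      = (G₁.neighborFinset v).map ⟨Sum.inl, Sum.inl_injective⟩ := by
  ext x
  simp only [SimpleGraph.mem_neighborFinset, Finset.mem_map, Function.Embedding.coeFn_mk]
  constructor
  · rintro (⟨a, b, ha, rfl, h⟩ | ⟨a, b, ha, rfl, h⟩ | ⟨h1, rfl⟩ | ⟨h1, h2⟩)
    · injection ha with ha; subst ha; exact ⟨b, by simpa using h, rfl⟩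
    · exact absurd ha (by simp)
    · exact absurd (Sum.inl.inj h1) hv
    · exact absurd h1 (by simp)
  · rintro ⟨w, hw, rfl⟩
    exact Or.inl ⟨v, w, rfl, rfl, by simpa using hw⟩

end JoinAux

theorem beta_joinGraph_of_ne {V₁ V₂ : Type*} [Fintype V₁] [Fintype V₂]
    [Nonempty V₁] [Nonempty V₂]
    (G₁ : SimpleGraph V₁) (G₂ : SimpleGraph V₂) [DecidableRel G₁.Adj]
    (hc₁ : G₁.Connected) (hc₂ : G₂.Connected) (h2 : 2 ≤ Fintype.card V₁)
    (v₁ : V₁) (v₂ : V₂) (v : V₁) (hv : v ≠ v₁) :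
    beta (joinGraph G₁ G₂ v₁ v₂) (Sum.inl v) = beta G₁ v := by
  classical
  have hbL : ∀ u : V₁,
      betaAt (joinGraph G₁ G₂ v₁ v₂) (Sum.inl v) (Sum.inl u) = betaAt G₁ v u := by
    intro u
    unfold betaAt
    rw [neighborFinset_inl v₁ v₂ hv, Finset.sum_map]
    refine Finset.sum_congr rfl fun w _ => ?_
    simp [dist_inl_inl v₁ v₂ hc₁ hc₂]
  have hbR : ∀ u : V₂,
      betaAt (joinGraph G₁ G₂ v₁ v₂) (Sum.inl v) (Sum.inr u) = betaAt G₁ v v₁ := by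
    intro u
    unfold betaAt
    rw [neighborFinset_inl v₁ v₂ hv, Finset.sum_map]
    refine Finset.sum_congr rfl fun w _ => ?_
    simp only [Function.Embedding.coeFn_mk, dist_inl_inr v₁ v₂ hc₁ hc₂]
    push_cast
    ring
  refine le_antisymm (Finset.sup'_le _ _ fun u _ => ?_) (Finset.sup'_le _ _ fun u _ => ?_)
  · cases u with
    | inl u => rw [hbL]; exact Finset.le_sup' _ (Finset.mem_univ u)
    | inr u => rw [hbR]; exact Finset.le_sup' _ (Finset.mem_univ v₁)
  · rw [← hbL u]
    exact Finset.le_sup' (betaAt (joinGraph G₁ G₂ v₁ v₂) (Sum.inl v)) (Finset.mem_univ (Sum.inl u))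
end

section
/- Let G be a finite connected simple graph. If the CEJZ boundary satisfies |(∂G)'| = 3, then the Steinerberger boundary satisfies |∂G| = 3. -/
open Finset

variable {V : Type*}

/-!
A CEJZ boundary vertex `v` with witness `u` is a Steinerberger boundary vertex for the same `u`:
no neighbour is farther from `u`, and the next vertex on a geodesic to `u` is closer.

Conversely, let `v` be a Steinerberger boundary vertex with witness `u` outside the CEJZ boundary.
Extending geodesics to the CEJZ boundary puts `u` and `v` on a geodesic between CEJZ boundary
vertices `b₀` and `b₁`, and `b₀` is again a witness for `v`. With `k = d(v, b₀)`, the neighbours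
of `v` are at distance at least `k - 1` from `b₀` and one is at distance `k + 1`, so an average
below `k` needs two neighbours `w₁ ≠ w₂` at distance `k - 1`; both are then at distance
`d(v, b₁) + 1` from `b₁`. Extending geodesics `w₂ → w₁` and `w₁ → w₂` to the CEJZ boundary gives
two more boundary vertices, distinct from each other and, as `w₁, w₂` are equidistant from `b₀`
and from `b₁`, from `b₀` and `b₁`. So a CEJZ boundary of at most three vertices contains the
Steinerberger boundary.
-/

lemma Finset.one_lt_card_filter_lt_of_sum_lt {ι : Type*} {s : Finset ι} {f : ι → ℕ} {k : ℕ}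
    {i₀ : ι} (hlow : ∀ i ∈ s, k ≤ f i + 1) (hi₀ : i₀ ∈ s) (hhigh : k < f i₀)
    (hsum : ∑ i ∈ s, f i < #s * k) : 1 < #(s.filter (f · < k)) := by
  by_contra! hle
  have hlt : ∑ i ∈ s, ((f i : ℤ) - k) < 0 := by
    have : ((∑ i ∈ s, f i : ℕ) : ℤ) < #s * k := by exact_mod_cast hsum
    rw [sum_sub_distrib, sum_const, nsmul_eq_mul]
    push_cast at this
    linarith
  have hsmall : -(#(s.filter (f · < k)) : ℤ) ≤ ∑ i ∈ s.filter (f · < k), ((f i : ℤ) - k) := by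
    simpa using sum_le_sum fun i hi ↦
      (by have := hlow i (mem_filter.1 hi).1; omega : (-1 : ℤ) ≤ f i - k)
  have hlarge : (f i₀ : ℤ) - k ≤ ∑ i ∈ s.filter (¬ f · < k), ((f i : ℤ) - k) :=
    single_le_sum (f := fun i ↦ (f i : ℤ) - k)
      (fun i hi ↦ by have := (mem_filter.1 hi).2; omega) (mem_filter.2 ⟨hi₀, by omega⟩)
  rw [← sum_filter_add_sum_filter_not s (f · < k)] at hlt
  omega

namespace SimpleGraph

variable {G : SimpleGraph V}

lemma Adj.dist_le_add_one {v w : V} (h : G.Adj v w) (u : V) : G.dist u w ≤ G.dist u v + 1 := by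
  rcases h.diff_dist_adj (u := u) with h' | h' | h' <;> omega

lemma Connected.exists_adj_dist_add_one_eq (hc : G.Connected) {v u : V} (h : v ≠ u) :
    ∃ w, G.Adj v w ∧ G.dist w u + 1 = G.dist v u := by
  obtain ⟨p, hp⟩ := hc.exists_walk_length_eq_dist v u
  cases p with
  | nil => exact absurd rfl h
  | @cons _ w _ hvw q =>
    refine ⟨w, hvw, le_antisymm ?_ ?_⟩
    · have := dist_le q
      rw [Walk.length_cons] at hp
      omega
    · have := hvw.symm.dist_le_add_one u
      rw [dist_comm, dist_comm (u := u)] at this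
      omega

lemma Connected.exists_mem_cBoundary_dist_eq_add [Finite V] (hc : G.Connected) (u a : V) :
    ∃ z ∈ cBoundary G, G.dist u z = G.dist u a + G.dist a z := by
  obtain ⟨z, hz, hmax⟩ := Set.exists_max_image {z | G.dist u z = G.dist u a + G.dist a z}
    (G.dist u) (Set.toFinite _) ⟨a, by simp⟩
  refine ⟨z, ⟨u, fun w hzw ↦ ?_⟩, hz⟩
  rw [dist_comm, dist_comm (u := z)]
  by_contra! hfar
  have hgeo : G.dist u w = G.dist u a + G.dist a w := by
    have := hc.dist_triangle (u := u) (v := a) (w := w)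
    have := hzw.dist_le_add_one u
    have := hzw.dist_le_add_one a
    replace hz : G.dist u z = G.dist u a + G.dist a z := hz
    omega
  have := hmax w hgeo
  omega

lemma Connected.ne_of_dist_eq_add (hc : G.Connected) {w₁ w₂ t b : V} (hne : w₁ ≠ w₂)
    (ht : G.dist w₂ t = G.dist w₂ w₁ + G.dist w₁ t) (hb : G.dist w₁ b = G.dist w₂ b) : t ≠ b := by
  rintro rfl
  have := hc.pos_dist_of_ne hne.symm
  omega

lemma Connected.exists_mem_cBoundary_ne_ne [Finite V] (hc : G.Connected) {w₁ w₂ : V}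
    (hne : w₁ ≠ w₂) : ∃ t₁ ∈ cBoundary G, ∃ t₂ ∈ cBoundary G, t₁ ≠ t₂ ∧
      ∀ b, G.dist w₁ b = G.dist w₂ b → t₁ ≠ b ∧ t₂ ≠ b := by
  obtain ⟨t₁, ht₁, hd₁⟩ := hc.exists_mem_cBoundary_dist_eq_add w₂ w₁
  obtain ⟨t₂, ht₂, hd₂⟩ := hc.exists_mem_cBoundary_dist_eq_add w₁ w₂
  refine ⟨t₁, ht₁, t₂, ht₂, ?_, fun b hb ↦
    ⟨hc.ne_of_dist_eq_add hne hd₁ hb, hc.ne_of_dist_eq_add hne.symm hd₂ hb.symm⟩⟩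
  rintro rfl
  have := hc.pos_dist_of_ne hne
  have := dist_comm (G := G) (u := w₁) (v := w₂)
  omega

lemma Connected.dist_eq_add_one_of_adj (hc : G.Connected) {b₀ b₁ v w : V} (hvw : G.Adj v w)
    (hgeo : G.dist b₀ b₁ = G.dist v b₀ + G.dist v b₁) (hw : G.dist w b₀ + 1 = G.dist v b₀) :
    G.dist w b₁ = G.dist v b₁ + 1 := by
  have htri := hc.dist_triangle (u := b₀) (v := w) (w := b₁)
  rw [dist_comm (u := b₀) (v := w)] at htri
  have hstep := hvw.dist_le_add_one b₁
  rw [dist_comm (u := b₁), dist_comm (u := b₁)] at hstep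
  omega

lemma Connected.exists_mem_cBoundary_geodesic [Finite V] (hc : G.Connected) (u v : V) :
    ∃ b₀ ∈ cBoundary G, ∃ b₁ ∈ cBoundary G,
      G.dist v b₀ = G.dist v u + G.dist u b₀ ∧ G.dist b₀ b₁ = G.dist v b₀ + G.dist v b₁ := by
  obtain ⟨b₁, hb₁, hd₁⟩ := hc.exists_mem_cBoundary_dist_eq_add u v
  obtain ⟨b₀, hb₀, hd₀⟩ := hc.exists_mem_cBoundary_dist_eq_add b₁ u
  have := hc.dist_triangle (u := v) (v := u) (w := b₀)
  have := hc.dist_triangle (u := b₁) (v := v) (w := b₀)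
  have := dist_comm (G := G) (u := b₀) (v := b₁)
  have := dist_comm (G := G) (u := b₁) (v := v)
  have := dist_comm (G := G) (u := b₁) (v := u)
  have := dist_comm (G := G) (u := u) (v := v)
  exact ⟨b₀, hb₀, b₁, hb₁, by omega, by omega⟩

section Finite

variable [Fintype V] [DecidableRel G.Adj]

lemma Connected.sum_dist_lt_of_dist_eq_add (hc : G.Connected) {v u b : V}
    (hu : ∑ w ∈ G.neighborFinset v, G.dist w u < G.degree v * G.dist v u)
    (hb : G.dist v b = G.dist v u + G.dist u b) :
    ∑ w ∈ G.neighborFinset v, G.dist w b < G.degree v * G.dist v b := calc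
  ∑ w ∈ G.neighborFinset v, G.dist w b
      ≤ ∑ w ∈ G.neighborFinset v, (G.dist w u + G.dist u b) :=
        sum_le_sum fun _ _ ↦ hc.dist_triangle
  _ = ∑ w ∈ G.neighborFinset v, G.dist w u + G.degree v * G.dist u b := by
        rw [sum_add_distrib, sum_const, card_neighborFinset_eq_degree, smul_eq_mul]
  _ < G.degree v * G.dist v u + G.degree v * G.dist u b := by omega
  _ = G.degree v * G.dist v b := by rw [hb, mul_add]

lemma Connected.cBoundary_subset_sBoundary (hc : G.Connected) : cBoundary G ⊆ sBoundary G := by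
  rintro v ⟨u, hu⟩
  unfold sBoundary
  split_ifs with hV
  · trivial
  have hvu : v ≠ u := by
    rintro rfl
    obtain ⟨x, hx⟩ := Fintype.exists_ne_of_one_lt_card
      (lt_of_le_of_ne (Fintype.card_pos_iff.2 ⟨v⟩) (Ne.symm hV)) v
    obtain ⟨w, hvw, -⟩ := hc.exists_adj_dist_add_one_eq hx.symm
    have := hc.pos_dist_of_ne hvw.ne.symm
    have := hu w hvw
    rw [dist_self] at this
    omega
  obtain ⟨w₀, hvw₀, hw₀⟩ := hc.exists_adj_dist_add_one_eq hvu
  refine ⟨u, ?_⟩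
  calc ∑ w ∈ G.neighborFinset v, G.dist w u
      < ∑ w ∈ G.neighborFinset v, G.dist v u :=
        sum_lt_sum (fun w hw ↦ hu w ((G.mem_neighborFinset v w).1 hw))
          ⟨w₀, (G.mem_neighborFinset v w₀).2 hvw₀, by omega⟩
    _ = G.degree v * G.dist v u := by
        rw [sum_const, card_neighborFinset_eq_degree, smul_eq_mul]

lemma exists_ne_adj_dist_add_one_eq {v b f : V} (hvf : G.Adj v f)
    (hf : G.dist v b < G.dist f b)
    (hsum : ∑ w ∈ G.neighborFinset v, G.dist w b < G.degree v * G.dist v b) :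
    ∃ w₁ w₂, w₁ ≠ w₂ ∧ G.Adj v w₁ ∧ G.Adj v w₂ ∧
      G.dist w₁ b + 1 = G.dist v b ∧ G.dist w₂ b + 1 = G.dist v b := by
  have hlow : ∀ w ∈ G.neighborFinset v, G.dist v b ≤ G.dist w b + 1 := fun w hw ↦ by
    have := ((G.mem_neighborFinset v w).1 hw).symm.dist_le_add_one b
    rwa [dist_comm, dist_comm (u := b)] at this
  obtain ⟨w₁, hw₁, w₂, hw₂, hne⟩ := one_lt_card.1 <|
    one_lt_card_filter_lt_of_sum_lt hlow ((G.mem_neighborFinset v f).2 hvf) hf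
      (by rwa [card_neighborFinset_eq_degree])
  rw [mem_filter] at hw₁ hw₂
  have := hlow w₁ hw₁.1
  have := hlow w₂ hw₂.1
  rw [mem_neighborFinset] at hw₁ hw₂
  exact ⟨w₁, w₂, hne, hw₁.1, hw₂.1, by omega, by omega⟩

lemma Connected.four_le_ncard_cBoundary (hc : G.Connected) {v u : V}
    (hu : ∑ w ∈ G.neighborFinset v, G.dist w u < G.degree v * G.dist v u)
    (hv : v ∉ cBoundary G) : 4 ≤ (cBoundary G).ncard := by
  obtain ⟨b₀, hb₀, b₁, hb₁, hvb₀, hgeo⟩ := hc.exists_mem_cBoundary_geodesic u v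
  have hb₀b₁ : b₀ ≠ b₁ := by
    rintro rfl
    have := hc.pos_dist_of_ne (ne_of_mem_of_not_mem hb₀ hv).symm
    rw [dist_self] at hgeo
    omega
  obtain ⟨f, hvf, hf⟩ : ∃ f, G.Adj v f ∧ G.dist v b₀ < G.dist f b₀ := by
    simp only [cBoundary, Set.mem_ofPred_eq, not_exists, not_forall, not_le] at hv
    simpa only [exists_prop] using hv b₀
  obtain ⟨w₁, w₂, hne, hw₁, hw₂, hw₁b₀, hw₂b₀⟩ :=
    exists_ne_adj_dist_add_one_eq hvf hf (hc.sum_dist_lt_of_dist_eq_add hu hvb₀)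
  have hw₁b₁ := hc.dist_eq_add_one_of_adj hw₁ hgeo hw₁b₀
  have hw₂b₁ := hc.dist_eq_add_one_of_adj hw₂ hgeo hw₂b₀
  obtain ⟨t₁, ht₁, t₂, ht₂, ht₁₂, hequi⟩ := hc.exists_mem_cBoundary_ne_ne hne
  obtain ⟨ht₁b₀, ht₂b₀⟩ := hequi b₀ (by omega)
  obtain ⟨ht₁b₁, ht₂b₁⟩ := hequi b₁ (by omega)
  calc 4 = ({b₀, b₁, t₁, t₂} : Set V).ncard := by
        rw [Set.ncard_insert_of_notMem, Set.ncard_insert_of_notMem, Set.ncard_pair ht₁₂] <;>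
          simp [*, Ne.symm]
    _ ≤ (cBoundary G).ncard := Set.ncard_le_ncard (by simp [Set.insert_subset_iff, *])

lemma Connected.sBoundary_subset_cBoundary (hc : G.Connected) (h3 : (cBoundary G).ncard ≤ 3) :
    sBoundary G ⊆ cBoundary G := by
  intro v hv
  by_contra hvc
  unfold sBoundary at hv
  split_ifs at hv with hV
  · exact hvc ⟨v, fun w hvw ↦ absurd (Fintype.card_le_one_iff.1 hV.le v w) hvw.ne⟩
  · obtain ⟨u, hu⟩ := hv
    have := hc.four_le_ncard_cBoundary hu hvc
    omega

end Finite

end SimpleGraph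

theorem sBoundary_card_three_of_cBoundary_card_three [Fintype V] (G : SimpleGraph V)
    [DecidableRel G.Adj] (hc : G.Connected) (h3 : (cBoundary G).ncard = 3) :
    (sBoundary G).ncard = 3 := by
  rw [(hc.sBoundary_subset_cBoundary h3.le).antisymm hc.cBoundary_subset_sBoundary, h3]
end

section
/- Let G be a finite connected simple graph on vertex set V with at least two vertices and diameter at most 2. If G has exactly one vertex v of eccentricity 1, then ∂G = V \ {v}; otherwise ∂G = V. -/
open Finset

variable {V : Type*}

/-!
Write `S(v, u) = ∑_{w ∼ v} d(w, u)`. If `v ≠ u` and no neighbour of `v` is farther from `u`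
than `v` itself, then `S(v, u) < deg v · d(v, u)`, because the neighbour on a geodesic from `v`
to `u` is strictly closer. With diameter at most `2`, this puts every non-universal vertex `v` in
the boundary (take `u` non-adjacent to `v`, so `d(v, u) = 2`), and also a universal vertex `v`
whenever some other vertex `t` is universal (take `u = t`). Conversely, if `v` is universal and
`u` is not, then `S(v, u)` is the total distance from `u` minus `1`; it is at least `n - 1 = deg v`
since `u` has a vertex at distance `2`. So the only universal vertex, if there is one, is not in
the boundary.
-/

namespace SimpleGraph

variable [Fintype V] {G : SimpleGraph V}

lemma dist_le_ecc (G : SimpleGraph V) (v u : V) : G.dist v u ≤ ecc G v :=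
  le_sup (mem_univ u)

lemma ecc_le_gdiam (G : SimpleGraph V) (v : V) : ecc G v ≤ gdiam G :=
  le_sup (mem_univ v)

lemma IsUniversal.ecc_le_one {v : V} (hv : G.IsUniversal v) : ecc G v ≤ 1 := by
  refine Finset.sup_le fun w _ => ?_
  rcases eq_or_ne v w with rfl | hne
  · simp
  · exact (dist_eq_one_iff_adj.mpr (hv hne)).le

lemma Connected.ecc_eq_one_iff_isUniversal [Nontrivial V] (hc : G.Connected) {v : V} :
    ecc G v = 1 ↔ G.IsUniversal v := by
  constructor
  · intro hv w hvw
    have := hc.pos_dist_of_ne hvw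
    have := hv ▸ G.dist_le_ecc v w
    exact dist_eq_one_iff_adj.mp (by omega)
  · intro hv
    obtain ⟨w, hw⟩ := exists_ne v
    have := hc.pos_dist_of_ne hw.symm
    have := G.dist_le_ecc v w
    have := hv.ecc_le_one
    omega

lemma Connected.card_add_dist_le_sum_dist (hc : G.Connected) (u z : V) :
    Fintype.card V + G.dist u z ≤ ∑ w, G.dist u w + 2 := by
  classical
  set rest := (univ.erase z).erase u
  have hcard : Fintype.card V - 2 ≤ #rest :=
    calc Fintype.card V - 2 ≤ #(univ.erase z) - 1 := by
          have := pred_card_le_card_erase (s := univ) (a := z)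
          rw [card_univ] at this
          omega
      _ ≤ #rest := pred_card_le_card_erase
  have hrest : #rest ≤ ∑ w ∈ rest, G.dist u w := by
    rw [card_eq_sum_ones]
    exact sum_le_sum fun w hw => hc.pos_dist_of_ne (ne_of_mem_erase hw).symm
  have hsplit : G.dist u z + ∑ w ∈ rest, G.dist u w ≤ ∑ w, G.dist u w := by
    rw [← add_sum_erase _ _ (mem_univ z)]
    exact Nat.add_le_add_left (sum_le_sum_of_subset (erase_subset u _)) _
  omega

variable [DecidableRel G.Adj]

lemma Connected.sum_dist_lt_of_forall_dist_le (hc : G.Connected) {v u : V} (huv : u ≠ v)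
    (hmax : ∀ w ∈ G.neighborFinset v, G.dist w u ≤ G.dist v u) :
    ∑ w ∈ G.neighborFinset v, G.dist w u < G.degree v * G.dist v u := by
  obtain ⟨p, hp⟩ := hc.exists_walk_length_eq_dist v u
  cases p with
  | nil => exact absurd rfl huv
  | @cons _ b _ hvb q =>
    have hcloser : G.dist b u < G.dist v u :=
      (dist_le q).trans_lt (by rw [← hp, Walk.length_cons]; omega)
    calc ∑ w ∈ G.neighborFinset v, G.dist w u
        < ∑ _w ∈ G.neighborFinset v, G.dist v u :=
          sum_lt_sum hmax ⟨b, (mem_neighborFinset G v b).mpr hvb, hcloser⟩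
      _ = G.degree v * G.dist v u := by
          rw [sum_const, smul_eq_mul, card_neighborFinset_eq_degree]

lemma Connected.degree_mul_dist_le_sum_dist (hc : G.Connected) {v u : V}
    (hv : G.IsUniversal v) (hu : ¬ G.IsUniversal u) :
    G.degree v * G.dist v u ≤ ∑ w ∈ G.neighborFinset v, G.dist w u := by
  classical
  have huv : u ≠ v := by rintro rfl; exact hu hv
  obtain ⟨z, huz, hnadj⟩ : ∃ z, u ≠ z ∧ ¬ G.Adj u z := by
    simpa [IsUniversal] using hu
  have hfar : 1 < G.dist u z := hc.one_lt_dist_of_ne_of_not_adj huz hnadj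
  have htotal := hc.card_add_dist_le_sum_dist u z
  have hsplit : ∑ w ∈ G.neighborFinset v, G.dist w u + G.dist v u = ∑ w, G.dist u w := by
    rw [(G.neighborFinset_eq_erase_univ v).mpr hv, sum_erase_add _ _ (mem_univ v)]
    exact sum_congr rfl fun w _ => dist_comm
  have hdeg : G.degree v = Fintype.card V - 1 := (G.degree_eq_card_sub_one v).mpr hv
  have hvu : G.dist v u = 1 := dist_eq_one_iff_adj.mpr (hv huv.symm)
  rw [hdeg, hvu, mul_one]
  rw [hvu] at hsplit
  have := Fintype.card_pos_iff.mpr ⟨v⟩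
  omega

lemma sBoundary_of_nontrivial [Nontrivial V] :
    sBoundary G = {v | ∃ u, ∑ w ∈ G.neighborFinset v, G.dist w u < G.degree v * G.dist v u} :=
  if_neg Fintype.one_lt_card.ne'

lemma mem_sBoundary_of_sum_dist_lt {v u : V}
    (h : ∑ w ∈ G.neighborFinset v, G.dist w u < G.degree v * G.dist v u) : v ∈ sBoundary G := by
  unfold sBoundary
  split_ifs
  exacts [Set.mem_univ v, ⟨u, h⟩]

lemma Connected.mem_sBoundary_of_ecc_le_dist (hc : G.Connected) {v u : V} (huv : u ≠ v)
    (h : ecc G u ≤ G.dist v u) : v ∈ sBoundary G :=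
  mem_sBoundary_of_sum_dist_lt <| hc.sum_dist_lt_of_forall_dist_le huv fun w _ =>
    dist_comm.trans_le <| (G.dist_le_ecc u w).trans h

lemma Connected.mem_sBoundary_of_not_isUniversal (hc : G.Connected) (hdiam : gdiam G ≤ 2)
    {v : V} (hv : ¬ G.IsUniversal v) : v ∈ sBoundary G := by
  obtain ⟨u, hvu, hnadj⟩ : ∃ u, v ≠ u ∧ ¬ G.Adj v u := by
    simpa [IsUniversal] using hv
  refine hc.mem_sBoundary_of_ecc_le_dist hvu.symm ?_
  have := hc.one_lt_dist_of_ne_of_not_adj hvu hnadj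
  have := (G.ecc_le_gdiam u).trans hdiam
  omega

lemma Connected.mem_sBoundary_of_isUniversal_of_ne (hc : G.Connected) {v t : V}
    (hv : G.IsUniversal v) (ht : G.IsUniversal t) (htv : t ≠ v) : v ∈ sBoundary G :=
  hc.mem_sBoundary_of_ecc_le_dist htv <| by
    rw [dist_eq_one_iff_adj.mpr (hv htv.symm)]
    exact ht.ecc_le_one

lemma Connected.notMem_sBoundary_of_isUniversal [Nontrivial V] (hc : G.Connected) {v : V}
    (hv : G.IsUniversal v) (honly : ∀ u ≠ v, ¬ G.IsUniversal u) : v ∉ sBoundary G := by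
  rw [sBoundary_of_nontrivial]
  rintro ⟨u, hu⟩
  rcases eq_or_ne u v with rfl | huv
  · simp at hu
  · exact (hc.degree_mul_dist_le_sum_dist hv (honly u huv)).not_gt hu

end SimpleGraph

open SimpleGraph in
theorem sBoundary_of_diam_le_two [Fintype V] (G : SimpleGraph V) [DecidableRel G.Adj]
    (hc : G.Connected) (h2 : 2 ≤ Fintype.card V) (hdiam : gdiam G ≤ 2) :
    ((∃! v : V, ecc G v = 1) → ∀ v : V, ecc G v = 1 → sBoundary G = {w : V | w ≠ v}) ∧
    (¬ (∃! v : V, ecc G v = 1) → sBoundary G = Set.univ) := by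
  have : Nontrivial V := Fintype.one_lt_card_iff_nontrivial.mp h2
  simp only [hc.ecc_eq_one_iff_isUniversal]
  refine ⟨fun ⟨_, _, huniq⟩ v hv => ?_, fun hnot => ?_⟩
  · have honly : ∀ u ≠ v, ¬ G.IsUniversal u := fun u huv hu =>
      huv ((huniq u hu).trans (huniq v hv).symm)
    ext w
    rcases eq_or_ne w v with rfl | hwv
    · simpa using hc.notMem_sBoundary_of_isUniversal hv honly
    · simpa [hwv] using hc.mem_sBoundary_of_not_isUniversal hdiam (honly w hwv)
  · refine Set.eq_univ_of_forall fun w => ?_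
    by_cases hw : G.IsUniversal w
    · obtain ⟨t, ht, htw⟩ : ∃ t, G.IsUniversal t ∧ t ≠ w := by
        by_contra! h
        exact hnot ⟨w, hw, h⟩
      exact hc.mem_sBoundary_of_isUniversal_of_ne hw ht htw
    · exact hc.mem_sBoundary_of_not_isUniversal hdiam hw
end
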